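/- arXiv:1207.0408 — 4 statements merged into one kernel-verified Lean document; each statement's English description precedes it below -/
import Mathlib

section
/- If P and Q are endomorphisms of finite-dimensional vector spaces of dimensions n and m respectively, then det(P ⊗ Q) = (det P)^m · (det Q)^n. -/
open Module

/-- If `P` and `Q` are endomorphisms of finite-dimensional vector spaces of dimensions
`n` and `m`, then `det (P ⊗ Q) = (det P)^m * (det Q)^n`. -/
theorem det_tensorProduct_map {K : Type*} [Field K]
    {M N : Type*} [AddCommGroup M] [Module K M] [AddCommGroup N] [Module K N]
    [FiniteDimensional K M] [FiniteDimensional K N]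
    (P : M →ₗ[K] M) (Q : N →ₗ[K] N) :
    LinearMap.det (TensorProduct.map P Q) =
      (LinearMap.det P) ^ (Module.finrank K N) * (LinearMap.det Q) ^ (Module.finrank K M) := by
  let bM := Module.finBasis K M
  let bN := Module.finBasis K N
  rw [← LinearMap.det_toMatrix (bM.tensorProduct bN), ← LinearMap.det_toMatrix bM,
    ← LinearMap.det_toMatrix bN, TensorProduct.toMatrix_map,
    Matrix.det_kronecker, Fintype.card_fin, Fintype.card_fin]
end

section
/- For a real symmetric matrix A of nullity k, the conormal space at A to the submanifold of symmetric matrices of nullity k (inside Sym(n,ℝ), dual identified via the trace pairing) consists exactly of the symmetric matrices B with A B = 0, equivalently with column space of B contained in ker A; this space is spanned by the rank-one matrices −v vᵀ with v ∈ ker A, v ≠ 0. -/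
open Matrix

/-!
For any `C`, the symmetric matrix `A C + Cᵀ A` is tangent to the stratum, and pairing `B` with
it for `C = A B` gives `2 tr((A B)ᵀ (A B))`; so a conormal `B` satisfies `A B = 0`. Conversely,
by the spectral theorem a symmetric `B` with `A B = 0` is a combination of the `u uᵀ` for its
eigenvectors `u` with nonzero eigenvalue, which lie in the range of `B`, hence in `ker A`; and
`tr(X u uᵀ) = uᵀ X u` vanishes for every tangent `X`.
-/

namespace Matrix

theorem IsHermitian.eq_sum_eigenvalues_smul_vecMulVec {𝕜 ι : Type*} [RCLike 𝕜] [Fintype ι]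
    [DecidableEq ι] {B : Matrix ι ι 𝕜} (hB : B.IsHermitian) :
    B = ∑ i, (hB.eigenvalues i : 𝕜) •
      vecMulVec ⇑(hB.eigenvectorBasis i) (star ⇑(hB.eigenvectorBasis i)) := by
  conv_lhs => rw [hB.spectral_theorem, Unitary.conjStarAlgAut_apply]
  ext l m
  rw [mul_apply, Matrix.sum_apply]
  refine Finset.sum_congr rfl fun i _ => ?_
  simp only [mul_diagonal, star_eq_conjTranspose, conjTranspose_apply, Function.comp_apply,
    eigenvectorUnitary_apply, smul_apply, vecMulVec_apply, Pi.star_apply, smul_eq_mul]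
  ring

section CommRing

variable {R ι : Type*} [CommRing R] [Fintype ι]

def symmRightAnnihilator (A : Matrix ι ι R) : Submodule R (Matrix ι ι R) where
  carrier := {B | B.IsSymm ∧ A * B = 0}
  add_mem' := fun ⟨hB, hAB⟩ ⟨hC, hAC⟩ =>
    ⟨hB.add hC, by rw [Matrix.mul_add, hAB, hAC, add_zero]⟩
  zero_mem' := ⟨isSymm_zero, Matrix.mul_zero A⟩
  smul_mem' := fun c _ ⟨hB, hAB⟩ => ⟨hB.smul c, by rw [Matrix.mul_smul, hAB, smul_zero]⟩

theorem neg_vecMulVec_self_mem_symmRightAnnihilator {A : Matrix ι ι R} {v : ι → R}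
    (hv : A *ᵥ v = 0) : -vecMulVec v v ∈ A.symmRightAnnihilator := by
  refine neg_mem ⟨transpose_vecMulVec v v, ?_⟩
  rw [mul_vecMulVec, hv, zero_vecMulVec]

theorem IsSymm.mul_add_transpose_mul {A : Matrix ι ι R} (hA : A.IsSymm) (C : Matrix ι ι R) :
    (A * C + Cᵀ * A).IsSymm := by
  rw [IsSymm, transpose_add, transpose_mul, transpose_mul, transpose_transpose, hA.eq, add_comm]

theorem IsSymm.dotProduct_mul_add_transpose_mul_mulVec_eq_zero {A : Matrix ι ι R}
    (hA : A.IsSymm) (C : Matrix ι ι R) {v w : ι → R} (hv : A *ᵥ v = 0) (hw : A *ᵥ w = 0) :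
    v ⬝ᵥ (A * C + Cᵀ * A) *ᵥ w = 0 := by
  have hvA : v ᵥ* A = 0 := by rw [← mulVec_transpose, hA.eq, hv]
  rw [add_mulVec, dotProduct_add, ← mulVec_mulVec, ← mulVec_mulVec, dotProduct_mulVec, hvA, hw,
    mulVec_zero, zero_dotProduct, dotProduct_zero, add_zero]

end CommRing

variable {ι : Type*} [Fintype ι]

theorem span_neg_vecMulVec_self_eq_symmRightAnnihilator [DecidableEq ι] (A : Matrix ι ι ℝ) :
    Submodule.span ℝ {C | ∃ v : ι → ℝ, v ≠ 0 ∧ A *ᵥ v = 0 ∧ C = -vecMulVec v v} =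
      A.symmRightAnnihilator := by
  refine le_antisymm (Submodule.span_le.2 ?_) fun B ⟨hB, hAB⟩ => ?_
  · rintro _ ⟨v, -, hv, rfl⟩
    exact neg_vecMulVec_self_mem_symmRightAnnihilator hv
  have hH : B.IsHermitian := isHermitian_iff_isSymm.2 hB
  rw [hH.eq_sum_eigenvalues_smul_vecMulVec]
  refine Submodule.sum_mem _ fun i _ => ?_
  set u := ⇑(hH.eigenvectorBasis i)
  set μ := hH.eigenvalues i
  rcases eq_or_ne μ 0 with hμ | hμ
  · simp [hμ]
  have hu : A *ᵥ u = 0 := by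
    have h := congrArg (A *ᵥ ·) (hH.mulVec_eigenvectorBasis i)
    simp only [mulVec_mulVec, hAB, zero_mulVec, mulVec_smul] at h
    exact (smul_eq_zero.1 h.symm).resolve_left hμ
  have hu0 : u ≠ 0 := fun h =>
    hH.eigenvectorBasis.orthonormal.ne_zero i (by rw [← WithLp.ofLp_eq_zero]; exact h)
  have hterm : (μ : ℝ) • vecMulVec u (star u) = (-μ) • -vecMulVec u u := by
    rw [star_trivial, neg_smul_neg]
  rw [RCLike.ofReal_real_eq_id, id, hterm]
  exact Submodule.smul_mem _ _ (Submodule.subset_span ⟨u, hu0, hu, rfl⟩)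

theorem trace_mul_eq_zero_of_mem_symmRightAnnihilator [DecidableEq ι] {A B X : Matrix ι ι ℝ}
    (hB : B ∈ A.symmRightAnnihilator) (hX : ∀ v, A *ᵥ v = 0 → v ⬝ᵥ X *ᵥ v = 0) :
    trace (X * B) = 0 := by
  rw [← span_neg_vecMulVec_self_eq_symmRightAnnihilator] at hB
  suffices h :
      Submodule.span ℝ {C | ∃ v : ι → ℝ, v ≠ 0 ∧ A *ᵥ v = 0 ∧ C = -vecMulVec v v} ≤
        LinearMap.ker ((traceLinearMap ι ℝ ℝ).comp (LinearMap.mulLeft ℝ X)) from h hB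
  refine Submodule.span_le.2 ?_
  rintro _ ⟨v, -, hv, rfl⟩
  simp [mul_vecMulVec, dotProduct_comm, hX v hv]

theorem IsSymm.mul_eq_zero_of_forall_trace_mul_eq_zero {A B : Matrix ι ι ℝ} (hA : A.IsSymm)
    (hB : B.IsSymm) (h : ∀ X : Matrix ι ι ℝ, X.IsSymm →
      (∀ v w, A *ᵥ v = 0 → A *ᵥ w = 0 → v ⬝ᵥ X *ᵥ w = 0) → trace (X * B) = 0) :
    A * B = 0 := by
  set M := A * B
  have hMt : Mᵀ = B * A := by rw [transpose_mul, hA.eq, hB.eq]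
  have htr : trace ((A * M + Mᵀ * A) * B) = 2 * trace (Mᵀ * M) := by
    rw [add_mul, trace_add, trace_mul_cycle, hMt, Matrix.mul_assoc (B * A), Matrix.mul_assoc]
    ring
  have hMM : trace (Mᵀ * M) = 0 := by
    have h0 := h _ (hA.mul_add_transpose_mul M) fun _ _ =>
      hA.dotProduct_mul_add_transpose_mul_mulVec_eq_zero M
    linarith
  rwa [← conjTranspose_eq_transpose_of_trivial, trace_conjTranspose_mul_self_eq_zero_iff] at hMM

end Matrix

theorem conormal_space_nullity_stratum_general (n : ℕ)
    (A : Matrix (Fin n) (Fin n) ℝ) (hA : A.IsSymm) :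
    {B : Matrix (Fin n) (Fin n) ℝ | B.IsSymm ∧
        ∀ X : Matrix (Fin n) (Fin n) ℝ, X.IsSymm →
          (∀ v w : Fin n → ℝ, A.mulVec v = 0 → A.mulVec w = 0 →
            dotProduct v (X.mulVec w) = 0) →
          Matrix.trace (X * B) = 0} =
      {B : Matrix (Fin n) (Fin n) ℝ | B.IsSymm ∧ A * B = 0} ∧
    {B : Matrix (Fin n) (Fin n) ℝ | B.IsSymm ∧ A * B = 0} =
      {B : Matrix (Fin n) (Fin n) ℝ | B.IsSymm ∧ ∀ u : Fin n → ℝ, A.mulVec (B.mulVec u) = 0} ∧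
    (↑(Submodule.span ℝ
        {B : Matrix (Fin n) (Fin n) ℝ | ∃ v : Fin n → ℝ, v ≠ 0 ∧ A.mulVec v = 0 ∧
          B = Matrix.of fun i j => -(v i * v j)}) : Set (Matrix (Fin n) (Fin n) ℝ)) =
      {B : Matrix (Fin n) (Fin n) ℝ | B.IsSymm ∧ A * B = 0} := by
  -- `-vecMulVec v v` is definitionally `of fun i j => -(v i * v j)`
  refine ⟨?_, ?_, congrArg SetLike.coe (span_neg_vecMulVec_self_eq_symmRightAnnihilator A)⟩
  · ext B
    exact ⟨fun ⟨hB, h⟩ => ⟨hB, hA.mul_eq_zero_of_forall_trace_mul_eq_zero hB h⟩,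
      fun hB => ⟨hB.1, fun X _ hX =>
        trace_mul_eq_zero_of_mem_symmRightAnnihilator hB fun v hv => hX v v hv hv⟩⟩
  · ext B
    simp only [Set.mem_ofPred_eq, ext_iff_mulVec (B := 0), ← mulVec_mulVec, zero_mulVec]

/-- For a real symmetric matrix `A` of nullity `k`, the conormal space at `A` to the
submanifold of symmetric matrices of nullity `k` (the annihilator under the trace pairing
of the tangent space `{X symmetric : ⟨Xv,w⟩ = 0 for v,w ∈ ker A}`) consists exactly of the
symmetric matrices `B` with `A B = 0`, equivalently with column space of `B` contained in
`ker A`, and it is spanned by the rank-one matrices `-v vᵀ` with `v ∈ ker A`, `v ≠ 0`. -/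
theorem conormal_space_nullity_stratum (n k : ℕ)
    (A : Matrix (Fin n) (Fin n) ℝ) (hA : A.IsSymm)
    (hk : Module.finrank ℝ ↥(LinearMap.ker A.mulVecLin) = k) :
    {B : Matrix (Fin n) (Fin n) ℝ | B.IsSymm ∧
        ∀ X : Matrix (Fin n) (Fin n) ℝ, X.IsSymm →
          (∀ v w : Fin n → ℝ, A.mulVec v = 0 → A.mulVec w = 0 →
            dotProduct v (X.mulVec w) = 0) →
          Matrix.trace (X * B) = 0} =
      {B : Matrix (Fin n) (Fin n) ℝ | B.IsSymm ∧ A * B = 0} ∧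
    {B : Matrix (Fin n) (Fin n) ℝ | B.IsSymm ∧ A * B = 0} =
      {B : Matrix (Fin n) (Fin n) ℝ | B.IsSymm ∧ ∀ u : Fin n → ℝ, A.mulVec (B.mulVec u) = 0} ∧
    (↑(Submodule.span ℝ
        {B : Matrix (Fin n) (Fin n) ℝ | ∃ v : Fin n → ℝ, v ≠ 0 ∧ A.mulVec v = 0 ∧
          B = Matrix.of fun i j => -(v i * v j)}) : Set (Matrix (Fin n) (Fin n) ℝ)) =
      {B : Matrix (Fin n) (Fin n) ℝ | B.IsSymm ∧ A * B = 0} :=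
  conormal_space_nullity_stratum_general n A hA
end

section
/- Let N, N′ be two lagrangian complements of a lagrangian subspace L in a symplectic vector space V, and let ρ_N, ρ_{N′} be the corresponding affine charts of the lagrangian grassmannian by symmetric forms on L (via graphs). Then for M transversal to both N and N′, ρ_{N′}(M) = (I + ρ_N(M) B)^{-1} ρ_N(M), where B is the symmetric operator obtained by viewing N′ as the graph of a map from N ≅ L* to L. In particular the differential of the transition map ρ_{N′} ∘ ρ_N^{-1} at 0 is the identity. -/
open Module

/-- Transition between two affine charts of the lagrangian grassmannian.  With `V = L × L*`,
`N = {0} × L*`, and `N'` the graph of a symmetric `B : L* → L`, if the lagrangian `M` is the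
graph `{(x, A x)}` of the symmetric `A = ρ_N(M) : L → L*` and corresponds to `A' = ρ_{N'}(M)`
in the chart determined by `N'` (i.e. `M = {(a − B(A' a), A' a)}`), then
`(I + A ∘ B) ∘ A' = A`, i.e. `ρ_{N'}(M) = (I + ρ_N(M) B)⁻¹ ρ_N(M)`. -/
theorem chart_transition_formula (L : Type*) [AddCommGroup L] [Module ℝ L]
    [FiniteDimensional ℝ L]
    (A A' : L →ₗ[ℝ] Module.Dual ℝ L) (B : Module.Dual ℝ L →ₗ[ℝ] L)
    (hA : ∀ x y, A x y = A y x)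
    (hA' : ∀ x y, A' x y = A' y x)
    (hB : ∀ ξ η : Module.Dual ℝ L, ξ (B η) = η (B ξ))
    (hgraph : Set.range (fun x : L => (x, A x)) =
      Set.range (fun a : L => (a - B (A' a), A' a))) :
    (LinearMap.id + A ∘ₗ B) ∘ₗ A' = A := by
  ext a
  have h : (a - B (A' a), A' a) ∈ Set.range (fun x : L => (x, A x)) := by
    rw [hgraph]; exact ⟨a, rfl⟩
  obtain ⟨x, hx⟩ := h
  have h1 : x = a - B (A' a) := congrArg Prod.fst hx
  have h2 : A x = A' a := congrArg Prod.snd hx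
  rw [h1, map_sub] at h2
  have h3 : A a = A' a + A (B (A' a)) := sub_eq_iff_eq_add.mp h2
  simp only [LinearMap.comp_apply, LinearMap.add_apply, LinearMap.id_apply, h3]
end

section
/- For any two lagrangian subspaces L and L₀ of a finite-dimensional symplectic vector space V, there exists a lagrangian subspace Q transversal to both L and L₀. -/
/-!
Build `Q` one vector at a time. Let `W` be isotropic, transversal to `L` and `L₀`, with
`dim W < dim L, dim L₀`. Were `W^⊥ ≤ W ⊔ L`, every vector of `W^⊥ ⊓ L` would be orthogonal to
`W ⊔ L ⊇ W^⊥`, so `W^⊥ ⊓ L ≤ W^⊥⊥ ⊓ L = W ⊓ L = 0`; but `dim W^⊥ + dim L = dim V - dim W + dim L`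
exceeds `dim V`. Since a vector space is not a union of two proper subspaces, some `x ∈ W^⊥` lies
outside both `W ⊔ L` and `W ⊔ L₀`, and `W ⊔ ℝx` is a larger isotropic subspace, still transversal
to `L` and `L₀`.
-/

open Module Submodule
open LinearMap (BilinForm)

namespace LinearMap.BilinForm

section CommSemiring

variable {R M : Type*} [CommSemiring R] [AddCommMonoid M] [Module R M] {B : BilinForm R M}

theorem orthogonal_sup (N N' : Submodule R M) :
    B.orthogonal (N ⊔ N') = B.orthogonal N ⊓ B.orthogonal N' := by
  refine le_antisymm (le_inf (orthogonal_le le_sup_left) (orthogonal_le le_sup_right)) ?_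
  rintro y ⟨hyN, hyN'⟩ _ hz
  obtain ⟨a, ha, b, hb, rfl⟩ := mem_sup.mp hz
  simp [hyN a ha, hyN' b hb]

theorem sup_span_singleton_le_orthogonal {W : Submodule R M} {x : M} (hB : B.IsRefl)
    (hW : W ≤ B.orthogonal W) (hx : x ∈ B.orthogonal W) (hxx : B x x = 0) :
    W ⊔ R ∙ x ≤ B.orthogonal (W ⊔ R ∙ x) := by
  have hxW : R ∙ x ≤ B.orthogonal W := (span_singleton_le_iff_mem _ _).mpr hx
  have hxx' : R ∙ x ≤ B.orthogonal (R ∙ x) := by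
    rw [span_singleton_le_iff_mem]
    intro _ hy
    obtain ⟨c, rfl⟩ := mem_span_singleton.mp hy
    simp [hxx]
  rw [orthogonal_sup]
  exact sup_le (le_inf hW ((le_orthogonal_orthogonal hB).trans (orthogonal_le hxW)))
    (le_inf hxW hxx')

end CommSemiring

variable {K V : Type*} [Field K] [AddCommGroup V] [Module K V] [FiniteDimensional K V]
  {B : BilinForm K V}

theorem orthogonal_not_le_sup_of_finrank_lt (hB : B.Nondegenerate) (hB' : B.IsRefl)
    {W M : Submodule K V} (hM : M ≤ B.orthogonal M) (hWM : Disjoint W M)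
    (hlt : finrank K W < finrank K M) : ¬ B.orthogonal W ≤ W ⊔ M := by
  intro hle
  have hdisj : Disjoint (B.orthogonal W) M := by
    rw [disjoint_iff_inf_le, ← hWM.eq_bot]
    refine le_inf (fun y hy ↦ ?_) inf_le_right
    rw [← orthogonal_orthogonal hB hB' W]
    exact orthogonal_le hle (by rw [orthogonal_sup]; exact ⟨hy.1, hM hy.2⟩)
  have := finrank_add_finrank_le_of_disjoint hdisj
  rw [finrank_orthogonal hB] at this
  have := W.finrank_le
  omega

theorem exists_isotropic_finrank_succ_disjoint (hB : B.Nondegenerate) (hB' : B.IsAlt)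
    {W L L₀ : Submodule K V} (hW : W ≤ B.orthogonal W) (hL : L ≤ B.orthogonal L)
    (hL₀ : L₀ ≤ B.orthogonal L₀) (hWL : Disjoint W L) (hWL₀ : Disjoint W L₀)
    (hlt : finrank K W < finrank K L) (hlt₀ : finrank K W < finrank K L₀) :
    ∃ W' : Submodule K V, W' ≤ B.orthogonal W' ∧ finrank K W' = finrank K W + 1 ∧
      Disjoint W' L ∧ Disjoint W' L₀ := by
  obtain ⟨x, hxW, hxL, hxL₀⟩ : ∃ x ∈ B.orthogonal W, x ∉ W ⊔ L ∧ x ∉ W ⊔ L₀ := by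
    have h := mt AddSubgroupClass.subset_union.mp <| not_or_intro
      (orthogonal_not_le_sup_of_finrank_lt hB hB'.isRefl hL hWL hlt)
      (orthogonal_not_le_sup_of_finrank_lt hB hB'.isRefl hL₀ hWL₀ hlt₀)
    simpa [Set.not_subset] using h
  have hxW' : x ∉ W := fun h ↦ hxL (mem_sup_left h)
  have disjoint_of_notMem {M : Submodule K V} (hWM : Disjoint W M) (hx : x ∉ W ⊔ M) :
      Disjoint (W ⊔ K ∙ x) M :=
    sup_comm W (K ∙ x) ▸
      hWM.disjoint_sup_left_of_disjoint_sup_right (disjoint_span_singleton_of_notMem hx).symm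
  exact ⟨W ⊔ K ∙ x, sup_span_singleton_le_orthogonal hB'.isRefl hW hxW (hB' x),
    finrank_sup_span_singleton hxW', disjoint_of_notMem hWL hxL, disjoint_of_notMem hWL₀ hxL₀⟩

theorem exists_isotropic_finrank_eq_disjoint (hB : B.Nondegenerate) (hB' : B.IsAlt)
    {L L₀ : Submodule K V} (hL : L ≤ B.orthogonal L) (hL₀ : L₀ ≤ B.orthogonal L₀) {k : ℕ}
    (hk : k ≤ finrank K L) (hk₀ : k ≤ finrank K L₀) :
    ∃ W : Submodule K V, W ≤ B.orthogonal W ∧ finrank K W = k ∧ Disjoint W L ∧ Disjoint W L₀ := by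
  induction k with
  | zero => exact ⟨⊥, bot_le, finrank_bot K V, disjoint_bot_left, disjoint_bot_left⟩
  | succ k ih =>
    obtain ⟨W, hW, rfl, hWL, hWL₀⟩ := ih (by omega) (by omega)
    exact exists_isotropic_finrank_succ_disjoint hB hB' hW hL hL₀ hWL hWL₀ hk hk₀

end LinearMap.BilinForm

theorem exists_common_transversal_lagrangian_general (n : ℕ)
    (V : Type*) [AddCommGroup V] [Module ℝ V] [FiniteDimensional ℝ V]
    (ω : LinearMap.BilinForm ℝ V) (halt : ∀ x, ω x x = 0) (hnd : ω.Nondegenerate)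
    (L L₀ : Submodule ℝ V)
    (hL : (∀ x ∈ L, ∀ y ∈ L, ω x y = 0) ∧ Module.finrank ℝ L = n)
    (hL₀ : (∀ x ∈ L₀, ∀ y ∈ L₀, ω x y = 0) ∧ Module.finrank ℝ L₀ = n) :
    ∃ Q : Submodule ℝ V,
      ((∀ x ∈ Q, ∀ y ∈ Q, ω x y = 0) ∧ Module.finrank ℝ Q = n) ∧
      Q ⊓ L = ⊥ ∧ Q ⊓ L₀ = ⊥ := by
  obtain ⟨Q, hQ, hQn, hQL, hQL₀⟩ :=
    LinearMap.BilinForm.exists_isotropic_finrank_eq_disjoint hnd halt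
    (fun y hy x hx ↦ hL.1 x hx y hy) (fun y hy x hx ↦ hL₀.1 x hx y hy) hL.2.ge hL₀.2.ge
  exact ⟨Q, ⟨fun x hx y hy ↦ hQ hy x hx, hQn⟩, disjoint_iff.mp hQL, disjoint_iff.mp hQL₀⟩

/-- For any two lagrangian subspaces `L` and `L₀` of a `2n`-dimensional real symplectic
vector space `(V, ω)`, there exists a lagrangian subspace `Q` transversal to both. -/
theorem exists_common_transversal_lagrangian (n : ℕ)
    (V : Type*) [AddCommGroup V] [Module ℝ V] [FiniteDimensional ℝ V]
    (hdim : Module.finrank ℝ V = 2 * n)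
    (ω : LinearMap.BilinForm ℝ V) (halt : ∀ x, ω x x = 0) (hnd : ω.Nondegenerate)
    (L L₀ : Submodule ℝ V)
    (hL : (∀ x ∈ L, ∀ y ∈ L, ω x y = 0) ∧ Module.finrank ℝ L = n)
    (hL₀ : (∀ x ∈ L₀, ∀ y ∈ L₀, ω x y = 0) ∧ Module.finrank ℝ L₀ = n) :
    ∃ Q : Submodule ℝ V,
      ((∀ x ∈ Q, ∀ y ∈ Q, ω x y = 0) ∧ Module.finrank ℝ Q = n) ∧
      Q ⊓ L = ⊥ ∧ Q ⊓ L₀ = ⊥ :=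
  exists_common_transversal_lagrangian_general n V ω halt hnd L L₀ hL hL₀
end
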